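/- arXiv:0704.2518 — 2 statements merged into one kernel-verified Lean document; each statement's English description precedes it below -/
import Mathlib

section
/- Let k ≥ 2. The total number S_k(n) of k-noncrossing RNA structures on {1,…,n} satisfies S_k(n) = Σ_{b=0}^{⌊n/2⌋} (-1)^b · C(n-b, b) · ( Σ_{ℓ=0}^{n-2b} f_k(n-2b, ℓ) ), where C(·,·) is the binomial coefficient; equivalently, S_k(n) = Σ_{b=0}^{⌊n/2⌋} (-1)^b C(n-b, b) g_k(n-2b), where g_k(m) is the total number of k-noncrossing partial matchings on {1,…,m}. -/
/-- A set of arcs (ordered pairs of vertices) is pairwise vertex-disjoint. -/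
def ArcsDisjoint (M : Finset (ℕ × ℕ)) : Prop :=
  ∀ p ∈ M, ∀ q ∈ M, p ≠ q → p.1 ≠ q.1 ∧ p.1 ≠ q.2 ∧ p.2 ≠ q.1 ∧ p.2 ≠ q.2

/-- `M` is a partial matching on `{1,…,n}`: arcs `(i,j)` with `1 ≤ i < j ≤ n`,
every vertex in at most one arc. -/
def IsPartialMatching (n : ℕ) (M : Finset (ℕ × ℕ)) : Prop :=
  (∀ p ∈ M, 1 ≤ p.1 ∧ p.1 < p.2 ∧ p.2 ≤ n) ∧ ArcsDisjoint M

/-- `M` contains `k` mutually crossing arcs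
`(i₁,j₁),…,(i_k,j_k)` with `i₁ < ⋯ < i_k < j₁ < ⋯ < j_k`. -/
def HasKCrossing (k : ℕ) (M : Finset (ℕ × ℕ)) : Prop :=
  ∃ f : Fin k → ℕ × ℕ, (∀ r, f r ∈ M) ∧
    (StrictMono fun r => (f r).1) ∧ (StrictMono fun r => (f r).2) ∧
    ∀ r s : Fin k, (f r).1 < (f s).2

/-- `M` is `k`-noncrossing. -/
def KNoncrossing (k : ℕ) (M : Finset (ℕ × ℕ)) : Prop := ¬ HasKCrossing k M

/-- The number of isolated vertices of `M` in `{1,…,n}`. -/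
def isolatedCount (n : ℕ) (M : Finset (ℕ × ℕ)) : ℕ :=
  ((Finset.Icc 1 n).filter fun v => ∀ p ∈ M, p.1 ≠ v ∧ p.2 ≠ v).card

/-- `fMatch k n ℓ`: the number of `k`-noncrossing partial matchings on `{1,…,n}`
with exactly `ℓ` isolated vertices. -/
noncomputable def fMatch (k n ℓ : ℕ) : ℕ :=
  Nat.card {M : Finset (ℕ × ℕ) //
    IsPartialMatching n M ∧ KNoncrossing k M ∧ isolatedCount n M = ℓ}

/-- `S_k(n)`: the total number of `k`-noncrossing RNA structures on `{1,…,n}`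
(`k`-noncrossing partial matchings with no 1-arc `(i,i+1)`). -/
noncomputable def STotal (k n : ℕ) : ℕ :=
  Nat.card {M : Finset (ℕ × ℕ) //
    IsPartialMatching n M ∧ KNoncrossing k M ∧ ∀ p ∈ M, p.2 ≠ p.1 + 1}

/-! The structures are the matchings avoiding the set `B` of 1-arcs, so by inclusion–exclusion
`S_k(n) = ∑_{A ⊆ B} (-1)^|A| · #{M ⊇ A}`, and only sets `A` of pairwise disjoint 1-arcs
contribute. An arc of a `k`-crossing (`k ≥ 2`) is crossed by another arc, hence is not a 1-arc;
so `M ↦ M \ A` identifies the matchings containing `A` with the `k`-noncrossing matchings on the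
`n - 2|A|` vertices not covered by `A`, which an order-preserving relabelling turns into
matchings on `{1,…,n-2|A|}`. Finally, splitting on whether the last 1-arc `(n-1, n)` is used
shows that the number `a(n, b)` of sets of `b` disjoint 1-arcs on `{1,…,n}` satisfies Pascal's
recursion `a(n, b) = a(n-1, b) + a(n-2, b-1)`, whence `a(n, b) = C(n-b, b)`. -/

open Finset

open scoped Classical

noncomputable def matchingsOn (k : ℕ) (C : Finset ℕ) : Finset (Finset (ℕ × ℕ)) :=
  (C ×ˢ C).powerset.filter fun M => (∀ p ∈ M, p.1 < p.2) ∧ ArcsDisjoint M ∧ KNoncrossing k M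

lemma mem_matchingsOn {k : ℕ} {C : Finset ℕ} {M : Finset (ℕ × ℕ)} :
    M ∈ matchingsOn k C ↔
      (∀ p ∈ M, p.1 ∈ C ∧ p.2 ∈ C ∧ p.1 < p.2) ∧ ArcsDisjoint M ∧ KNoncrossing k M := by
  simp only [matchingsOn, mem_filter, mem_powerset, subset_iff, mem_product, ← and_assoc,
    ← forall₂_and]

lemma mem_matchingsOn_Icc {k n : ℕ} {M : Finset (ℕ × ℕ)} :
    M ∈ matchingsOn k (Icc 1 n) ↔ IsPartialMatching n M ∧ KNoncrossing k M := by
  simp only [mem_matchingsOn, IsPartialMatching, mem_Icc, and_assoc]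
  exact and_congr_left' (forall₂_congr fun p _ => by omega)

lemma ArcsDisjoint.mono {M N : Finset (ℕ × ℕ)} (hN : ArcsDisjoint N) (h : M ⊆ N) :
    ArcsDisjoint M :=
  fun p hp q hq => hN p (h hp) q (h hq)

lemma natCard_subtype_eq_card {α : Type*} {P : α → Prop} {s : Finset α}
    (h : ∀ a, P a ↔ a ∈ s) : Nat.card {a // P a} = #s := by
  rw [Nat.card_congr (Equiv.subtypeEquivRight h), Nat.card_eq_finsetCard]

lemma sum_fMatch_eq_card (k n : ℕ) :
    ∑ ℓ ∈ range (n + 1), fMatch k n ℓ = #(matchingsOn k (Icc 1 n)) := by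
  rw [card_eq_sum_card_fiberwise (f := isolatedCount n) (t := range (n + 1))]
  · refine sum_congr rfl fun ℓ _ => (natCard_subtype_eq_card fun M => ?_)
    rw [mem_filter, mem_matchingsOn_Icc, and_assoc]
  · intro M _
    have : isolatedCount n M ≤ n := (card_filter_le _ _).trans_eq (Nat.card_Icc 1 n)
    simpa [Nat.lt_succ_iff] using this

section Crossing

variable {k : ℕ}

lemma HasKCrossing.mono {M N : Finset (ℕ × ℕ)} (h : HasKCrossing k M) (hMN : M ⊆ N) :
    HasKCrossing k N :=
  let ⟨f, hf, hmono⟩ := h; ⟨f, fun r => hMN (hf r), hmono⟩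

lemma HasKCrossing.of_forall_not_oneArc_mem (hk : 2 ≤ k) {M N : Finset (ℕ × ℕ)}
    (h : HasKCrossing k M) (hMN : ∀ p ∈ M, p.2 ≠ p.1 + 1 → p ∈ N) : HasKCrossing k N := by
  obtain ⟨f, hf, h1, h2, h3⟩ := h
  refine ⟨f, fun r => hMN _ (hf r) ?_, h1, h2, h3⟩
  have : Nontrivial (Fin k) := Fin.nontrivial_iff_two_le.2 hk
  obtain ⟨s, hs⟩ := exists_ne r
  rcases hs.lt_or_gt with hsr | hrs
  · have := h2 hsr; have := h3 r s; dsimp only at *; omega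
  · have := h1 hrs; have := h3 s r; dsimp only at *; omega

lemma HasKCrossing.of_image {s : Set ℕ} {ψ : ℕ → ℕ} (hψ : StrictMonoOn ψ s)
    {M : Finset (ℕ × ℕ)} (hM : ∀ p ∈ M, p.1 ∈ s ∧ p.2 ∈ s)
    (h : HasKCrossing k (M.image fun p => (ψ p.1, ψ p.2))) : HasKCrossing k M := by
  obtain ⟨f, hf, h1, h2, h3⟩ := h
  choose g hg hgf using fun r => mem_image.1 (hf r)
  have hs r : (g r).1 ∈ s ∧ (g r).2 ∈ s := hM _ (hg r)
  have e1 r : ψ (g r).1 = (f r).1 := congrArg Prod.fst (hgf r)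
  have e2 r : ψ (g r).2 = (f r).2 := congrArg Prod.snd (hgf r)
  refine ⟨g, hg, fun r t hrt => ?_, fun r t hrt => ?_, fun r t => ?_⟩
  · exact (hψ.lt_iff_lt (hs r).1 (hs t).1).1 (by rw [e1, e1]; exact h1 hrt)
  · exact (hψ.lt_iff_lt (hs r).2 (hs t).2).1 (by rw [e2, e2]; exact h2 hrt)
  · exact (hψ.lt_iff_lt (hs r).1 (hs t).2).1 (by rw [e1, e2]; exact h3 r t)

end Crossing

section Relabel

variable {k : ℕ} {C C' : Finset ℕ} (e : C ≃o C')

noncomputable def relabel (a : ℕ) : ℕ := if h : a ∈ C then e ⟨a, h⟩ else a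

lemma relabel_of_mem {a : ℕ} (ha : a ∈ C) : relabel e a = e ⟨a, ha⟩ := dif_pos ha

lemma relabel_mem {a : ℕ} (ha : a ∈ C) : relabel e a ∈ C' := by
  rw [relabel_of_mem e ha]; exact (e _).2

lemma relabel_symm_relabel {a : ℕ} (ha : a ∈ C) : relabel e.symm (relabel e a) = a := by
  rw [relabel_of_mem e.symm (relabel_mem e ha)]
  simp [relabel_of_mem e ha]

lemma strictMonoOn_relabel : StrictMonoOn (relabel e) C := fun a ha b hb hab => by
  rw [relabel_of_mem e ha, relabel_of_mem e hb]; exact e.strictMono hab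

lemma image_relabel_mem_matchingsOn {M : Finset (ℕ × ℕ)} (hM : M ∈ matchingsOn k C) :
    M.image (fun p => (relabel e p.1, relabel e p.2)) ∈ matchingsOn k C' := by
  obtain ⟨hC, hd, hnc⟩ := mem_matchingsOn.1 hM
  have hmono := strictMonoOn_relabel e
  have hinj := hmono.injOn
  refine mem_matchingsOn.2 ⟨?_, ?_, fun hcr => hnc (hcr.of_image hmono fun p hp => ?_)⟩
  · simp only [mem_image]
    rintro _ ⟨p, hp, rfl⟩
    obtain ⟨h1, h2, h12⟩ := hC p hp
    exact ⟨relabel_mem e h1, relabel_mem e h2, hmono h1 h2 h12⟩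
  · rintro _ hp' _ hq' hpq
    obtain ⟨p, hp, rfl⟩ := mem_image.1 hp'
    obtain ⟨q, hq, rfl⟩ := mem_image.1 hq'
    obtain ⟨e1, e2, e3, e4⟩ := hd p hp q hq (by rintro rfl; exact hpq rfl)
    obtain ⟨hp1, hp2, -⟩ := hC p hp
    obtain ⟨hq1, hq2, -⟩ := hC q hq
    exact ⟨(hinj.ne_iff hp1 hq1).2 e1, (hinj.ne_iff hp1 hq2).2 e2,
      (hinj.ne_iff hp2 hq1).2 e3, (hinj.ne_iff hp2 hq2).2 e4⟩
  · exact ⟨(hC p hp).1, (hC p hp).2.1⟩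

lemma image_relabel_symm_image_relabel {M : Finset (ℕ × ℕ)} (hM : M ∈ matchingsOn k C) :
    (M.image fun p => (relabel e p.1, relabel e p.2)).image
      (fun p => (relabel e.symm p.1, relabel e.symm p.2)) = M := by
  rw [image_image]
  refine (image_congr fun p hp => ?_).trans image_id
  obtain ⟨h1, h2, -⟩ := (mem_matchingsOn.1 hM).1 p hp
  simp [relabel_symm_relabel e h1, relabel_symm_relabel e h2]

end Relabel

lemma card_matchingsOn_eq_of_orderIso {k : ℕ} {C C' : Finset ℕ} (e : C ≃o C') :
    #(matchingsOn k C) = #(matchingsOn k C') :=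
  card_nbij' _ _ (fun _ hM => image_relabel_mem_matchingsOn e hM)
    (fun _ hM => image_relabel_mem_matchingsOn e.symm hM)
    (fun _ hM => image_relabel_symm_image_relabel e hM)
    (fun _ hM => by simpa using image_relabel_symm_image_relabel e.symm hM)

lemma card_matchingsOn_eq_of_card_eq {k : ℕ} {C C' : Finset ℕ} (h : #C = #C') :
    #(matchingsOn k C) = #(matchingsOn k C') :=
  card_matchingsOn_eq_of_orderIso ((C.orderIsoOfFin h).symm.trans (C'.orderIsoOfFin rfl))

def oneArcs (n : ℕ) : Finset (ℕ × ℕ) := (Ico 1 n).image fun i => (i, i + 1)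

lemma mem_oneArcs {n : ℕ} {p : ℕ × ℕ} : p ∈ oneArcs n ↔ 1 ≤ p.1 ∧ p.1 < n ∧ p.2 = p.1 + 1 := by
  obtain ⟨a, b⟩ := p
  simp only [oneArcs, mem_image, mem_Ico, Prod.mk.injEq]
  constructor
  · rintro ⟨i, hi, rfl, rfl⟩; exact ⟨hi.1, hi.2, rfl⟩
  · rintro ⟨h1, h2, rfl⟩; exact ⟨a, ⟨h1, h2⟩, rfl, rfl⟩

lemma disjoint_oneArcs_iff {n : ℕ} {M : Finset (ℕ × ℕ)}
    (hM : ∀ p ∈ M, 1 ≤ p.1 ∧ p.1 < p.2 ∧ p.2 ≤ n) :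
    Disjoint (oneArcs n) M ↔ ∀ p ∈ M, p.2 ≠ p.1 + 1 := by
  simp only [disjoint_right, mem_oneArcs]
  exact forall₂_congr fun p hp => by have := hM p hp; omega

lemma STotal_eq_card (k n : ℕ) :
    STotal k n = #((matchingsOn k (Icc 1 n)).filter (Disjoint (oneArcs n))) := by
  refine natCard_subtype_eq_card fun M => ?_
  rw [mem_filter, mem_matchingsOn_Icc, and_assoc]
  exact and_congr_right fun hM => and_congr_right fun _ => (disjoint_oneArcs_iff hM.1).symm

def arcVerts (A : Finset (ℕ × ℕ)) : Finset ℕ := A.biUnion fun p => {p.1, p.2}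

lemma mem_arcVerts {A : Finset (ℕ × ℕ)} {v : ℕ} :
    v ∈ arcVerts A ↔ ∃ p ∈ A, p.1 = v ∨ p.2 = v := by
  simp [arcVerts, eq_comm]

lemma card_arcVerts {A : Finset (ℕ × ℕ)} (h1 : ∀ p ∈ A, p.1 < p.2) (h2 : ArcsDisjoint A) :
    #(arcVerts A) = 2 * #A := by
  rw [arcVerts, card_biUnion, sum_congr rfl fun p hp => card_pair (h1 p hp).ne, sum_const,
    smul_eq_mul, mul_comm]
  intro p hp q hq hpq
  obtain ⟨e1, e2, e3, e4⟩ := h2 p hp q hq hpq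
  simp only [disjoint_left, mem_insert, mem_singleton]
  rintro a (rfl | rfl) <;> omega

lemma arcVerts_subset_Icc {n : ℕ} {A : Finset (ℕ × ℕ)} (hA : A ⊆ oneArcs n) :
    arcVerts A ⊆ Icc 1 n := by
  intro v hv
  obtain ⟨p, hp, hpv⟩ := mem_arcVerts.1 hv
  have := mem_oneArcs.1 (hA hp)
  rw [mem_Icc]
  omega

lemma arcsDisjoint_union {A B : Finset (ℕ × ℕ)} (hA : ArcsDisjoint A) (hB : ArcsDisjoint B)
    (hAB : ∀ p ∈ A, ∀ q ∈ B, p.1 ≠ q.1 ∧ p.1 ≠ q.2 ∧ p.2 ≠ q.1 ∧ p.2 ≠ q.2) :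
    ArcsDisjoint (A ∪ B) := by
  intro p hp q hq hpq
  rcases mem_union.1 hp with hp | hp <;> rcases mem_union.1 hq with hq | hq
  · exact hA p hp q hq hpq
  · exact hAB p hp q hq
  · obtain ⟨e1, e2, e3, e4⟩ := hAB q hq p hp
    exact ⟨e1.symm, e3.symm, e2.symm, e4.symm⟩
  · exact hB p hp q hq hpq

section Superset

variable {k : ℕ} {C : Finset ℕ} {A M : Finset (ℕ × ℕ)}

lemma sdiff_mem_matchingsOn (hM : M ∈ matchingsOn k C) (hAM : A ⊆ M) :
    M \ A ∈ matchingsOn k (C \ arcVerts A) := by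
  obtain ⟨hC, hd, hnc⟩ := mem_matchingsOn.1 hM
  have hfree : ∀ p ∈ M \ A, ∀ v, (p.1 = v ∨ p.2 = v) → v ∉ arcVerts A := by
    intro p hp v hv hvA
    obtain ⟨hpM, hpA⟩ := mem_sdiff.1 hp
    obtain ⟨q, hq, hqv⟩ := mem_arcVerts.1 hvA
    have := hd p hpM q (hAM hq) (by rintro rfl; exact hpA hq)
    omega
  refine mem_matchingsOn.2 ⟨fun p hp => ?_, hd.mono sdiff_subset,
    fun hcr => hnc (hcr.mono sdiff_subset)⟩
  obtain ⟨h1, h2, h12⟩ := hC p (sdiff_subset hp)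
  exact ⟨mem_sdiff.2 ⟨h1, hfree p hp _ (.inl rfl)⟩, mem_sdiff.2 ⟨h2, hfree p hp _ (.inr rfl)⟩, h12⟩

lemma union_mem_matchingsOn (hk : 2 ≤ k) (hA1 : ∀ p ∈ A, p.2 = p.1 + 1) (hAd : ArcsDisjoint A)
    (hAC : ∀ p ∈ A, p.1 ∈ C ∧ p.2 ∈ C) (hM : M ∈ matchingsOn k (C \ arcVerts A)) :
    A ∪ M ∈ matchingsOn k C := by
  obtain ⟨hC, hd, hnc⟩ := mem_matchingsOn.1 hM
  have hfree : ∀ p ∈ M, p.1 ∉ arcVerts A ∧ p.2 ∉ arcVerts A := fun p hp =>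
    ⟨(mem_sdiff.1 (hC p hp).1).2, (mem_sdiff.1 (hC p hp).2.1).2⟩
  refine mem_matchingsOn.2 ⟨fun p hp => ?_, arcsDisjoint_union hAd hd fun p hp q hq => ?_,
    fun hcr => hnc (hcr.of_forall_not_oneArc_mem hk fun p hp h1 => ?_)⟩
  · rcases mem_union.1 hp with hp | hp
    · exact ⟨(hAC p hp).1, (hAC p hp).2, by rw [hA1 p hp]; omega⟩
    · exact ⟨(mem_sdiff.1 (hC p hp).1).1, (mem_sdiff.1 (hC p hp).2.1).1, (hC p hp).2.2⟩
  · have h1 : p.1 ∈ arcVerts A := mem_arcVerts.2 ⟨p, hp, .inl rfl⟩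
    have h2 : p.2 ∈ arcVerts A := mem_arcVerts.2 ⟨p, hp, .inr rfl⟩
    obtain ⟨hq1, hq2⟩ := hfree q hq
    exact ⟨ne_of_mem_of_not_mem h1 hq1, ne_of_mem_of_not_mem h1 hq2,
      ne_of_mem_of_not_mem h2 hq1, ne_of_mem_of_not_mem h2 hq2⟩
  · exact (mem_union.1 hp).resolve_left fun hpA => h1 (hA1 p hpA)

lemma card_filter_superset_eq_card_matchingsOn_sdiff (hk : 2 ≤ k)
    (hA1 : ∀ p ∈ A, p.2 = p.1 + 1) (hAd : ArcsDisjoint A) (hAC : ∀ p ∈ A, p.1 ∈ C ∧ p.2 ∈ C) :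
    #((matchingsOn k C).filter (A ⊆ ·)) = #(matchingsOn k (C \ arcVerts A)) := by
  refine card_nbij' (· \ A) (A ∪ ·) (fun M hM => ?_) (fun M hM => ?_) (fun M hM => ?_)
    (fun M hM => ?_)
  · obtain ⟨hM, hAM⟩ := mem_filter.1 hM
    exact sdiff_mem_matchingsOn hM hAM
  · exact mem_filter.2 ⟨union_mem_matchingsOn hk hA1 hAd hAC hM, subset_union_left⟩
  · exact union_sdiff_of_subset (mem_filter.1 hM).2
  · refine union_sdiff_cancel_left (disjoint_left.2 fun p hpA hpM => ?_)
    exact (mem_sdiff.1 ((mem_matchingsOn.1 hM).1 p hpM).1).2 (mem_arcVerts.2 ⟨p, hpA, .inl rfl⟩)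

end Superset

lemma card_filter_superset_matchingsOn_Icc {k n : ℕ} (hk : 2 ≤ k) {A : Finset (ℕ × ℕ)}
    (hA : A ⊆ oneArcs n) :
    #((matchingsOn k (Icc 1 n)).filter (A ⊆ ·)) =
      if ArcsDisjoint A then #(matchingsOn k (Icc 1 (n - 2 * #A))) else 0 := by
  have hA1 p (hp : p ∈ A) := mem_oneArcs.1 (hA hp)
  split_ifs with hAd
  · rw [card_filter_superset_eq_card_matchingsOn_sdiff hk (fun p hp => (hA1 p hp).2.2) hAd
      fun p hp => by simp only [mem_Icc]; have := hA1 p hp; omega]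
    refine card_matchingsOn_eq_of_card_eq ?_
    rw [card_sdiff_of_subset (arcVerts_subset_Icc hA),
      card_arcVerts (fun p hp => by have := hA1 p hp; omega) hAd, Nat.card_Icc, Nat.card_Icc]
    omega
  · refine card_eq_zero.2 (filter_eq_empty_iff.2 fun M hM hAM => hAd ?_)
    exact (mem_matchingsOn.1 hM).2.1.mono hAM

section OneArcSets

noncomputable def disjointOneArcs (n b : ℕ) : Finset (Finset (ℕ × ℕ)) :=
  ((oneArcs n).powersetCard b).filter ArcsDisjoint

lemma oneArcs_add_two (n : ℕ) : oneArcs (n + 2) = insert (n + 1, n + 2) (oneArcs (n + 1)) := by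
  ext ⟨i, j⟩
  simp only [mem_insert, mem_oneArcs, Prod.mk.injEq]
  omega

lemma subset_oneArcs_and_arcsDisjoint_insert_iff {n : ℕ} {T : Finset (ℕ × ℕ)} :
    T ⊆ oneArcs (n + 1) ∧ ArcsDisjoint (insert (n + 1, n + 2) T) ↔
      T ⊆ oneArcs n ∧ ArcsDisjoint T := by
  constructor
  · rintro ⟨hT, h⟩
    refine ⟨fun q hq => ?_, h.mono (subset_insert _ _)⟩
    have hq' := mem_oneArcs.1 (hT hq)
    have := h _ (mem_insert_self _ _) q (mem_insert_of_mem hq) (by rintro rfl; omega)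
    exact mem_oneArcs.2 ⟨hq'.1, by omega, hq'.2.2⟩
  · rintro ⟨hTn, hTd⟩
    refine ⟨fun q hq => ?_, ?_⟩
    · have := mem_oneArcs.1 (hTn hq)
      exact mem_oneArcs.2 ⟨this.1, by omega, this.2.2⟩
    rw [insert_eq]
    refine arcsDisjoint_union (fun p hp q hq hpq => ?_) hTd fun p hp q hq => ?_
    · exact absurd ((mem_singleton.1 hp).trans (mem_singleton.1 hq).symm) hpq
    · have := mem_oneArcs.1 (hTn hq)
      rw [mem_singleton.1 hp]
      omega

lemma card_disjointOneArcs_add_two (n b : ℕ) :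
    #(disjointOneArcs (n + 2) (b + 1)) =
      #(disjointOneArcs (n + 1) (b + 1)) + #(disjointOneArcs n b) := by
  set x : ℕ × ℕ := (n + 1, n + 2)
  have hx : x ∉ oneArcs (n + 1) := by simp [x, mem_oneArcs]
  have hsplit : disjointOneArcs (n + 2) (b + 1) =
      disjointOneArcs (n + 1) (b + 1) ∪ (disjointOneArcs n b).image (insert x) := by
    rw [disjointOneArcs, oneArcs_add_two, powersetCard_succ_insert hx, filter_union,
      filter_image]
    congr 2
    ext T
    simp only [disjointOneArcs, mem_filter, mem_powersetCard]
    have := @subset_oneArcs_and_arcsDisjoint_insert_iff n T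
    tauto
  have hfree : ∀ T ∈ disjointOneArcs n b, x ∉ T := fun T hT hxT => by
    simpa [x, mem_oneArcs] using (mem_powersetCard.1 (mem_filter.1 hT).1).1 hxT
  rw [hsplit, card_union_of_disjoint, card_image_of_injOn]
  · intro T hT T' hT' h
    rw [← erase_insert (hfree T hT), ← erase_insert (hfree T' hT')]
    exact congrArg (·.erase x) h
  · refine disjoint_left.2 fun T hT hT' => ?_
    obtain ⟨T', -, rfl⟩ := mem_image.1 hT'
    exact hx ((mem_powersetCard.1 (mem_filter.1 hT).1).1 (mem_insert_self x T'))

lemma card_disjointOneArcs : ∀ n b : ℕ, #(disjointOneArcs n b) = (n - b).choose b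
  | n, 0 => by
    rw [disjointOneArcs, powersetCard_zero, filter_singleton,
      if_pos (show ArcsDisjoint ∅ from fun p hp => absurd hp (notMem_empty p)), card_singleton,
      Nat.choose_zero_right]
  | 0, b + 1 | 1, b + 1 => by simp [disjointOneArcs, oneArcs]
  | n + 2, b + 1 => by
    rw [card_disjointOneArcs_add_two, card_disjointOneArcs (n + 1) (b + 1),
      card_disjointOneArcs n b]
    rcases le_or_gt b n with hbn | hbn
    · rw [show n + 2 - (b + 1) = n - b + 1 by omega, Nat.choose_succ_succ',
        show n + 1 - (b + 1) = n - b by omega, add_comm]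
    · simp [Nat.sub_eq_zero_of_le (le_of_lt hbn), Nat.sub_eq_zero_of_le hbn,
        Nat.choose_eq_zero_of_lt (show 0 < b by omega)]

end OneArcSets

lemma card_filter_disjoint_eq_sum {α : Type*} [DecidableEq α] (F : Finset (Finset α))
    (B : Finset α) :
    (#(F.filter (Disjoint B)) : ℤ) = ∑ A ∈ B.powerset, (-1 : ℤ) ^ #A * #(F.filter (A ⊆ ·)) := by
  calc (#(F.filter (Disjoint B)) : ℤ)
      = ∑ M ∈ F, ∑ A ∈ (B ∩ M).powerset, (-1 : ℤ) ^ #A := by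
        rw [card_filter, Nat.cast_sum]
        refine sum_congr rfl fun M _ => ?_
        rw [sum_powerset_neg_one_pow_card]
        simp [disjoint_iff_inter_eq_empty]
    _ = ∑ M ∈ F, ∑ A ∈ B.powerset, if A ⊆ M then (-1 : ℤ) ^ #A else 0 := by
        refine sum_congr rfl fun M _ => ?_
        rw [← sum_filter]
        congr 1
        ext A
        simp only [mem_filter, mem_powerset, subset_inter_iff]
    _ = ∑ A ∈ B.powerset, ∑ M ∈ F, if A ⊆ M then (-1 : ℤ) ^ #A else 0 := sum_comm
    _ = ∑ A ∈ B.powerset, (-1 : ℤ) ^ #A * #(F.filter (A ⊆ ·)) := by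
        refine sum_congr rfl fun A _ => ?_
        rw [← sum_filter, sum_const, nsmul_eq_mul, mul_comm]

lemma sum_powerset_oneArcs_ite (n : ℕ) (g : ℕ → ℤ) :
    ∑ A ∈ (oneArcs n).powerset, (if ArcsDisjoint A then g #A else 0) =
      ∑ b ∈ range (n / 2 + 1), ((n - b).choose b : ℤ) * g b := by
  rw [← sum_filter, ← sum_fiberwise_of_maps_to (g := (#·)) (t := range (n / 2 + 1))]
  · refine sum_congr rfl fun b _ => ?_
    have hfiber : ((oneArcs n).powerset.filter ArcsDisjoint).filter (#· = b) =
        disjointOneArcs n b := by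
      ext A
      simp only [disjointOneArcs, mem_filter, mem_powerset, mem_powersetCard]
      tauto
    rw [sum_congr rfl fun A hA => by rw [(mem_filter.1 hA).2], sum_const, hfiber,
      card_disjointOneArcs, nsmul_eq_mul]
  · intro A hA
    obtain ⟨hA, hAd⟩ := mem_filter.1 hA
    have := card_le_card (arcVerts_subset_Icc (mem_powerset.1 hA))
    rw [card_arcVerts (fun p hp => by have := mem_oneArcs.1 (mem_powerset.1 hA hp); omega) hAd,
      Nat.card_Icc] at this
    rw [mem_range]
    omega

/-- For `k ≥ 2`:
`S_k(n) = Σ_{b=0}^{⌊n/2⌋} (-1)^b C(n-b,b) (Σ_{ℓ=0}^{n-2b} f_k(n-2b, ℓ))`. -/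
theorem STotal_eq_alternating_sum (k n : ℕ) (hk : 2 ≤ k) :
    (STotal k n : ℤ) =
      ∑ b ∈ Finset.range (n / 2 + 1),
        (-1) ^ b * ((n - b).choose b : ℤ) *
          ∑ ℓ ∈ Finset.range (n - 2 * b + 1), (fMatch k (n - 2 * b) ℓ : ℤ) := by
  have hterm : ∀ A ∈ (oneArcs n).powerset,
      (-1 : ℤ) ^ #A * (#((matchingsOn k (Icc 1 n)).filter (A ⊆ ·)) : ℤ) =
        if ArcsDisjoint A then (-1 : ℤ) ^ #A * #(matchingsOn k (Icc 1 (n - 2 * #A))) else 0 :=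
    fun A hA => by
      rw [card_filter_superset_matchingsOn_Icc hk (mem_powerset.1 hA)]
      split_ifs <;> simp
  rw [STotal_eq_card, card_filter_disjoint_eq_sum, sum_congr rfl hterm,
    sum_powerset_oneArcs_ite n fun b => (-1) ^ b * #(matchingsOn k (Icc 1 (n - 2 * b)))]
  refine sum_congr rfl fun b _ => ?_
  rw [← sum_fMatch_eq_card, Nat.cast_sum]
  ring
end

section
/- Let k > 2. The number S_k^{(r)}(n,ℓ) of restricted k-noncrossing RNA structures on {1,…,n} with exactly ℓ isolated vertices satisfies S_k^{(r)}(n,ℓ) = Σ_{b_1 ≥ 0, b_2 ≥ 0} (-1)^{b_1 + b_2} · λ(n, b_1, b_2) · f_k(n − 2(b_1 + b_2), ℓ), where λ(n, b_1, b_2) is the number of ways to select b_1 1-arcs and b_2 2-arcs over {1,…,n} that are pairwise vertex-disjoint. -/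
/-- `p` is a 1-arc over `{1,…,n}`, i.e. `p = (i, i+1)` with `1 ≤ i ≤ n-1`. -/
def IsOneArc (n : ℕ) (p : ℕ × ℕ) : Prop :=
  1 ≤ p.1 ∧ p.1 + 1 ≤ n ∧ p.2 = p.1 + 1

/-- `p` is a 2-arc over `{1,…,n}`, i.e. `p = (i, i+2)` with `1 ≤ i ≤ n-2`. -/
def IsTwoArc (n : ℕ) (p : ℕ × ℕ) : Prop :=
  1 ≤ p.1 ∧ p.1 + 2 ≤ n ∧ p.2 = p.1 + 2

/-- `λ(n, b₁, b₂)`: the number of ways to select `b₁` 1-arcs and `b₂` 2-arcs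
over `{1,…,n}` such that all selected arcs are pairwise vertex-disjoint. -/
noncomputable def lamSel (n b₁ b₂ : ℕ) : ℕ :=
  Nat.card {A : Finset (ℕ × ℕ) //
    (∀ p ∈ A, IsOneArc n p ∨ IsTwoArc n p) ∧ ArcsDisjoint A ∧
    (A.filter fun p => p.2 = p.1 + 1).card = b₁ ∧
    (A.filter fun p => p.2 = p.1 + 2).card = b₂}

/-- `S_k^{(r)}(n,ℓ)`: the number of restricted `k`-noncrossing RNA structures
on `{1,…,n}` (`k`-noncrossing partial matchings with no 1-arc `(i,i+1)` and no
2-arc `(i,i+2)`) with exactly `ℓ` isolated vertices. -/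
noncomputable def SRes (k n ℓ : ℕ) : ℕ :=
  Nat.card {M : Finset (ℕ × ℕ) //
    IsPartialMatching n M ∧ KNoncrossing k M ∧
    (∀ p ∈ M, p.2 ≠ p.1 + 1 ∧ p.2 ≠ p.1 + 2) ∧ isolatedCount n M = ℓ}

open Finset
open scoped Classical

/-- the ambient finset of potential matchings -/
noncomputable def Omega (n : ℕ) : Finset (Finset (ℕ × ℕ)) :=
  (Finset.Icc 1 n ×ˢ Finset.Icc 1 n).powerset

lemma natCard_eq_filter_card {α : Type*} (s : Finset α) (P : α → Prop) [DecidablePred P]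
    (h : ∀ x, P x → x ∈ s) :
    Nat.card {x // P x} = (s.filter P).card := by
  have hset : {x | P x} = ↑(s.filter P) := by
    ext x; simp only [Set.mem_setOf_eq, coe_filter, Set.mem_setOf_eq]
    exact ⟨fun hx => ⟨h x hx, hx⟩, fun hx => hx.2⟩
  calc Nat.card {x // P x} = Nat.card {x | P x} := rfl
    _ = Set.ncard {x | P x} := Nat.card_coe_set_eq _
    _ = (s.filter P).card := by rw [hset, Set.ncard_coe_finset]

def Epts (A : Finset (ℕ × ℕ)) : Finset ℕ := A.image Prod.fst ∪ A.image Prod.snd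

def Sfree (n : ℕ) (A : Finset (ℕ × ℕ)) : Finset ℕ := Finset.Icc 1 n \ Epts A

def idxm (n : ℕ) (A : Finset (ℕ × ℕ)) (v : ℕ) : ℕ :=
  ((Sfree n A).filter (· ≤ v)).card

noncomputable def liftm (n : ℕ) (A : Finset (ℕ × ℕ)) : ℕ → ℕ :=
  Function.invFunOn (idxm n A) ↑(Sfree n A)

section ArcSet

variable {n : ℕ} {A : Finset (ℕ × ℕ)}
variable (hA1 : ∀ p ∈ A, IsOneArc n p ∨ IsTwoArc n p) (hA2 : ArcsDisjoint A)

lemma arc_bounds (hA1 : ∀ p ∈ A, IsOneArc n p ∨ IsTwoArc n p) {p : ℕ × ℕ} (hp : p ∈ A) :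
    1 ≤ p.1 ∧ p.1 < p.2 ∧ p.2 ≤ n := by
  rcases hA1 p hp with ⟨h1, h2, h3⟩ | ⟨h1, h2, h3⟩ <;> omega

include hA1 hA2 in
lemma Epts_card : (Epts A).card = 2 * A.card := by
  have hfst : (A.image Prod.fst).card = A.card := by
    apply Finset.card_image_of_injOn
    intro p hp q hq hpq
    by_contra hne
    exact (hA2 p hp q hq hne).1 hpq
  have hsnd : (A.image Prod.snd).card = A.card := by
    apply Finset.card_image_of_injOn
    intro p hp q hq hpq
    by_contra hne
    exact (hA2 p hp q hq hne).2.2.2 hpq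
  have hdisj : Disjoint (A.image Prod.fst) (A.image Prod.snd) := by
    rw [Finset.disjoint_left]
    rintro x hx hy
    obtain ⟨p, hp, rfl⟩ := Finset.mem_image.1 hx
    obtain ⟨q, hq, hqx⟩ := Finset.mem_image.1 hy
    by_cases hpq : p = q
    · subst hpq
      have := (arc_bounds hA1 hp).2.1
      omega
    · exact (hA2 p hp q hq hpq).2.1 hqx.symm
  rw [Epts, Finset.card_union_of_disjoint hdisj, hfst, hsnd]; omega

include hA1 in
lemma Epts_subset : Epts A ⊆ Finset.Icc 1 n := by
  intro x hx
  rcases Finset.mem_union.1 hx with hx | hx <;>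
    obtain ⟨p, hp, rfl⟩ := Finset.mem_image.1 hx <;>
    have := arc_bounds hA1 hp <;> simp [Finset.mem_Icc] <;> omega

include hA1 hA2 in
lemma Sfree_card : (Sfree n A).card = n - 2 * A.card := by
  rw [Sfree, Finset.card_sdiff_of_subset (Epts_subset hA1), Epts_card hA1 hA2, Nat.card_Icc]
  omega

lemma mem_Sfree {v : ℕ} :
    v ∈ Sfree n A ↔ (1 ≤ v ∧ v ≤ n) ∧ ∀ p ∈ A, p.1 ≠ v ∧ p.2 ≠ v := by
  simp only [Sfree, Epts, Finset.mem_sdiff, Finset.mem_Icc, Finset.mem_union,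
    Finset.mem_image, not_or, not_exists]
  constructor
  · rintro ⟨⟨h1, h2⟩, h3, h4⟩
    push_neg at h3 h4
    exact ⟨⟨h1, h2⟩, fun p hp => ⟨h3 p hp, h4 p hp⟩⟩
  · rintro ⟨⟨h1, h2⟩, h⟩
    refine ⟨⟨h1, h2⟩, ?_, ?_⟩ <;> push_neg <;> intro p hp
    · exact (h p hp).1
    · exact (h p hp).2

lemma idxm_lt {u v : ℕ} (hu : u ∈ Sfree n A) (hv : v ∈ Sfree n A) (huv : u < v) :
    idxm n A u < idxm n A v := by
  apply Finset.card_lt_card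
  have hsub : (Sfree n A).filter (· ≤ u) ⊆ (Sfree n A).filter (· ≤ v) := by
    intro x hx
    simp only [Finset.mem_filter] at hx ⊢
    exact ⟨hx.1, hx.2.trans huv.le⟩
  apply (Finset.ssubset_iff_of_subset hsub).2
  exact ⟨v, by simp [Finset.mem_filter, hv], by simp [Finset.mem_filter]; omega⟩

lemma idxm_injOn {u v : ℕ} (hu : u ∈ Sfree n A) (hv : v ∈ Sfree n A)
    (h : idxm n A u = idxm n A v) : u = v := by
  rcases lt_trichotomy u v with hlt | he | hlt
  · exact absurd h (idxm_lt hu hv hlt).ne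
  · exact he
  · exact absurd h.symm (idxm_lt hv hu hlt).ne

lemma idxm_lt_iff {u v : ℕ} (hu : u ∈ Sfree n A) (hv : v ∈ Sfree n A) :
    idxm n A u < idxm n A v ↔ u < v := by
  constructor
  · intro h
    rcases lt_trichotomy u v with hlt | he | hlt
    · exact hlt
    · subst he; omega
    · exact absurd (idxm_lt hv hu hlt) (by omega)
  · exact idxm_lt hu hv

include hA1 hA2 in
lemma idxm_mem {v : ℕ} (hv : v ∈ Sfree n A) :
    idxm n A v ∈ Finset.Icc 1 (n - 2 * A.card) := by
  rw [Finset.mem_Icc]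
  constructor
  · have hvm : v ∈ (Sfree n A).filter (· ≤ v) := by simp [Finset.mem_filter, hv]
    have h0 : 0 < idxm n A v := Finset.card_pos.2 ⟨v, hvm⟩
    omega
  · calc idxm n A v ≤ (Sfree n A).card := Finset.card_filter_le _ _
      _ = n - 2 * A.card := Sfree_card hA1 hA2

include hA1 hA2 in
lemma idxm_surj {j : ℕ} (hj : j ∈ Finset.Icc 1 (n - 2 * A.card)) :
    ∃ v ∈ Sfree n A, idxm n A v = j := by
  have h := Finset.surj_on_of_inj_on_of_card_le
    (s := Sfree n A) (t := Finset.Icc 1 (n - 2 * A.card))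
    (fun v _ => idxm n A v) (fun v hv => idxm_mem hA1 hA2 hv)
    (fun u v hu hv h => idxm_injOn hu hv h)
    (by rw [Sfree_card hA1 hA2, Nat.card_Icc]; omega)
  obtain ⟨v, hv, hvj⟩ := h j hj
  exact ⟨v, hv, hvj.symm⟩

include hA1 hA2 in
lemma liftm_spec {j : ℕ} (hj : j ∈ Finset.Icc 1 (n - 2 * A.card)) :
    liftm n A j ∈ Sfree n A ∧ idxm n A (liftm n A j) = j := by
  obtain ⟨v, hv, hvj⟩ := idxm_surj hA1 hA2 hj
  have hex : ∃ x ∈ (↑(Sfree n A) : Set ℕ), idxm n A x = j := ⟨v, hv, hvj⟩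
  exact ⟨Function.invFunOn_mem hex, Function.invFunOn_eq hex⟩

lemma liftm_idxm {v : ℕ} (hv : v ∈ Sfree n A) : liftm n A (idxm n A v) = v := by
  have hex : ∃ x ∈ (↑(Sfree n A) : Set ℕ), idxm n A x = idxm n A v := ⟨v, hv, rfl⟩
  exact idxm_injOn (Function.invFunOn_mem hex) hv (Function.invFunOn_eq hex)

include hA1 hA2 in
lemma liftm_lt {i j : ℕ} (hi : i ∈ Finset.Icc 1 (n - 2 * A.card))
    (hj : j ∈ Finset.Icc 1 (n - 2 * A.card)) (hij : i < j) :
    liftm n A i < liftm n A j := by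
  obtain ⟨hiS, hieq⟩ := liftm_spec hA1 hA2 hi
  obtain ⟨hjS, hjeq⟩ := liftm_spec hA1 hA2 hj
  rw [← idxm_lt_iff hiS hjS, hieq, hjeq]; exact hij

include hA1 hA2 in
lemma liftm_injOn {i j : ℕ} (hi : i ∈ Finset.Icc 1 (n - 2 * A.card))
    (hj : j ∈ Finset.Icc 1 (n - 2 * A.card)) (h : liftm n A i = liftm n A j) : i = j := by
  have := (liftm_spec hA1 hA2 hi).2
  have := (liftm_spec hA1 hA2 hj).2
  rw [h] at *; omega

end ArcSet

def idxArc (n : ℕ) (A : Finset (ℕ × ℕ)) (p : ℕ × ℕ) : ℕ × ℕ :=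
  (idxm n A p.1, idxm n A p.2)

noncomputable def liftArc (n : ℕ) (A : Finset (ℕ × ℕ)) (q : ℕ × ℕ) : ℕ × ℕ :=
  (liftm n A q.1, liftm n A q.2)

noncomputable def PhiM (n : ℕ) (A M : Finset (ℕ × ℕ)) : Finset (ℕ × ℕ) :=
  (M \ A).image (idxArc n A)

noncomputable def PsiM (n : ℕ) (A N : Finset (ℕ × ℕ)) : Finset (ℕ × ℕ) :=
  A ∪ N.image (liftArc n A)

section Forward

variable {n k ℓ : ℕ} {A M : Finset (ℕ × ℕ)}
variable (hA1 : ∀ p ∈ A, IsOneArc n p ∨ IsTwoArc n p) (hA2 : ArcsDisjoint A)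
variable (hM : IsPartialMatching n M) (hAM : A ⊆ M)

include hM hAM in
lemma sdiff_mem_Sfree {p : ℕ × ℕ} (hp : p ∈ M \ A) :
    p.1 ∈ Sfree n A ∧ p.2 ∈ Sfree n A := by
  rw [Finset.mem_sdiff] at hp
  obtain ⟨hpM, hpA⟩ := hp
  obtain ⟨h1, h2, h3⟩ := hM.1 p hpM
  have key : ∀ q ∈ A, (q.1 ≠ p.1 ∧ q.2 ≠ p.1) ∧ (q.1 ≠ p.2 ∧ q.2 ≠ p.2) := by
    intro q hq
    have hqp : q ≠ p := fun h => hpA (h ▸ hq)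
    obtain ⟨a, b, c, d⟩ := hM.2 q (hAM hq) p hpM hqp
    exact ⟨⟨a, c⟩, ⟨b, d⟩⟩
  constructor
  · rw [mem_Sfree]
    exact ⟨⟨h1, by omega⟩, fun q hq => (key q hq).1⟩
  · rw [mem_Sfree]
    exact ⟨⟨by omega, h3⟩, fun q hq => (key q hq).2⟩

include hA1 hA2 hM hAM in
lemma Phi_matching : IsPartialMatching (n - 2 * A.card) (PhiM n A M) := by
  constructor
  · intro q hq
    obtain ⟨p, hp, rfl⟩ := Finset.mem_image.1 hq
    obtain ⟨hS1, hS2⟩ := sdiff_mem_Sfree hM hAM hp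
    have h1 := idxm_mem hA1 hA2 hS1
    have h2 := idxm_mem hA1 hA2 hS2
    rw [Finset.mem_Icc] at h1 h2
    have hlt : p.1 < p.2 := (hM.1 p (Finset.mem_sdiff.1 hp).1).2.1
    have := idxm_lt hS1 hS2 hlt
    exact ⟨h1.1, this, h2.2⟩
  · intro q hq q' hq' hne
    obtain ⟨p, hp, rfl⟩ := Finset.mem_image.1 hq
    obtain ⟨p', hp', rfl⟩ := Finset.mem_image.1 hq'
    obtain ⟨hS1, hS2⟩ := sdiff_mem_Sfree hM hAM hp
    obtain ⟨hS1', hS2'⟩ := sdiff_mem_Sfree hM hAM hp'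
    have hpp' : p ≠ p' := by rintro rfl; exact hne rfl
    obtain ⟨a, b, c, d⟩ := hM.2 p (Finset.mem_sdiff.1 hp).1 p' (Finset.mem_sdiff.1 hp').1 hpp'
    refine ⟨?_, ?_, ?_, ?_⟩ <;> intro h
    · exact a (idxm_injOn hS1 hS1' h)
    · exact b (idxm_injOn hS1 hS2' h)
    · exact c (idxm_injOn hS2 hS1' h)
    · exact d (idxm_injOn hS2 hS2' h)

include hM hAM in
lemma Phi_noncrossing (hK : KNoncrossing k M) : KNoncrossing k (PhiM n A M) := by
  intro ⟨f, hf, hmono1, hmono2, hcross⟩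
  have hch : ∀ r : Fin k, ∃ p ∈ M \ A, idxArc n A p = f r := by
    intro r
    obtain ⟨p, hp, hpe⟩ := Finset.mem_image.1 (hf r)
    exact ⟨p, hp, hpe⟩
  choose g hg hge using hch
  have hgS : ∀ r, (g r).1 ∈ Sfree n A ∧ (g r).2 ∈ Sfree n A :=
    fun r => sdiff_mem_Sfree hM hAM (hg r)
  apply hK
  refine ⟨g, fun r => (Finset.mem_sdiff.1 (hg r)).1, ?_, ?_, ?_⟩
  · intro r s hrs
    have h := hmono1 hrs
    have e1 : (f r).1 = idxm n A (g r).1 := by rw [← hge r]; rfl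
    have e2 : (f s).1 = idxm n A (g s).1 := by rw [← hge s]; rfl
    dsimp only at h
    rw [e1, e2] at h
    exact (idxm_lt_iff (hgS r).1 (hgS s).1).1 h
  · intro r s hrs
    have h := hmono2 hrs
    have e1 : (f r).2 = idxm n A (g r).2 := by rw [← hge r]; rfl
    have e2 : (f s).2 = idxm n A (g s).2 := by rw [← hge s]; rfl
    dsimp only at h
    rw [e1, e2] at h
    exact (idxm_lt_iff (hgS r).2 (hgS s).2).1 h
  · intro r s
    have h := hcross r s
    have e1 : (f r).1 = idxm n A (g r).1 := by rw [← hge r]; rfl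
    have e2 : (f s).2 = idxm n A (g s).2 := by rw [← hge s]; rfl
    rw [e1, e2] at h
    exact (idxm_lt_iff (hgS r).1 (hgS s).2).1 h

include hA1 hA2 hM hAM in
lemma Phi_isolated : isolatedCount (n - 2 * A.card) (PhiM n A M) = isolatedCount n M := by
  classical
  set m := n - 2 * A.card with hm
  have hiso : ((Finset.Icc 1 m).filter fun v => ∀ p ∈ PhiM n A M, p.1 ≠ v ∧ p.2 ≠ v)
      = ((Finset.Icc 1 n).filter fun v => ∀ p ∈ M, p.1 ≠ v ∧ p.2 ≠ v).image (idxm n A) := by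
    ext j
    simp only [Finset.mem_filter, Finset.mem_image]
    constructor
    · rintro ⟨hj, hisol⟩
      obtain ⟨v, hvS, rfl⟩ := idxm_surj hA1 hA2 hj
      refine ⟨v, ⟨?_, ?_⟩, rfl⟩
      · rw [mem_Sfree] at hvS; simp [Finset.mem_Icc]; omega
      · intro p hpM
        by_cases hpA : p ∈ A
        · rw [mem_Sfree] at hvS
          exact hvS.2 p hpA
        · have hpd : p ∈ M \ A := Finset.mem_sdiff.2 ⟨hpM, hpA⟩
          obtain ⟨hS1, hS2⟩ := sdiff_mem_Sfree hM hAM hpd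
          have := hisol (idxArc n A p) (Finset.mem_image_of_mem _ hpd)
          constructor
          · intro h; exact this.1 (by rw [idxArc, h])
          · intro h; exact this.2 (by rw [idxArc, h])
    · rintro ⟨v, ⟨hv, hisol⟩, rfl⟩
      have hvS : v ∈ Sfree n A := by
        rw [mem_Sfree]
        rw [Finset.mem_Icc] at hv
        exact ⟨hv, fun p hp => hisol p (hAM hp)⟩
      refine ⟨idxm_mem hA1 hA2 hvS, ?_⟩
      intro q hq
      obtain ⟨p, hpd, rfl⟩ := Finset.mem_image.1 hq
      obtain ⟨hS1, hS2⟩ := sdiff_mem_Sfree hM hAM hpd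
      have hpi := hisol p (Finset.mem_sdiff.1 hpd).1
      constructor
      · intro h
        exact hpi.1 (idxm_injOn hS1 hvS h)
      · intro h
        exact hpi.2 (idxm_injOn hS2 hvS h)
  rw [isolatedCount, isolatedCount, hiso]
  apply Finset.card_image_of_injOn
  intro u hu v hv huv
  simp only [Finset.mem_coe, Finset.mem_filter] at hu hv
  have huS : u ∈ Sfree n A := by
    rw [mem_Sfree]; rw [Finset.mem_Icc] at hu
    exact ⟨hu.1, fun p hp => hu.2 p (hAM hp)⟩
  have hvS : v ∈ Sfree n A := by
    rw [mem_Sfree]; rw [Finset.mem_Icc] at hv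
    exact ⟨hv.1, fun p hp => hv.2 p (hAM hp)⟩
  exact idxm_injOn huS hvS huv

end Forward

section Backward

variable {n k ℓ : ℕ} {A N : Finset (ℕ × ℕ)}
variable (hA1 : ∀ p ∈ A, IsOneArc n p ∨ IsTwoArc n p) (hA2 : ArcsDisjoint A)
variable (hN : IsPartialMatching (n - 2 * A.card) N)

include hN in
lemma N_mem_Icc {q : ℕ × ℕ} (hq : q ∈ N) :
    q.1 ∈ Finset.Icc 1 (n - 2 * A.card) ∧ q.2 ∈ Finset.Icc 1 (n - 2 * A.card) := by
  obtain ⟨h1, h2, h3⟩ := hN.1 q hq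
  constructor <;> rw [Finset.mem_Icc] <;> omega

include hA1 hA2 hN in
lemma lift_endpoints {q : ℕ × ℕ} (hq : q ∈ N) :
    liftm n A q.1 ∈ Sfree n A ∧ idxm n A (liftm n A q.1) = q.1 ∧
    liftm n A q.2 ∈ Sfree n A ∧ idxm n A (liftm n A q.2) = q.2 := by
  obtain ⟨hq1, hq2⟩ := N_mem_Icc hN hq
  obtain ⟨a, b⟩ := liftm_spec hA1 hA2 hq1
  obtain ⟨c, d⟩ := liftm_spec hA1 hA2 hq2
  exact ⟨a, b, c, d⟩

lemma mem_Epts_fst {p : ℕ × ℕ} (hp : p ∈ A) : p.1 ∈ Epts A :=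
  Finset.mem_union.2 (Or.inl (Finset.mem_image_of_mem _ hp))

lemma mem_Epts_snd {p : ℕ × ℕ} (hp : p ∈ A) : p.2 ∈ Epts A :=
  Finset.mem_union.2 (Or.inr (Finset.mem_image_of_mem _ hp))

lemma Sfree_not_Epts {v : ℕ} (hv : v ∈ Sfree n A) : v ∉ Epts A :=
  (Finset.mem_sdiff.1 hv).2

include hA1 hA2 hN in
lemma Psi_img_disjoint : Disjoint A (N.image (liftArc n A)) := by
  rw [Finset.disjoint_left]
  intro p hpA hpI
  obtain ⟨q, hq, hqe⟩ := Finset.mem_image.1 hpI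
  have h1 := (lift_endpoints hA1 hA2 hN hq).1
  have : p.1 = liftm n A q.1 := by rw [← hqe]; rfl
  exact Sfree_not_Epts (this ▸ h1) (mem_Epts_fst hpA)

include hA1 hA2 hN in
lemma Psi_subset : A ⊆ PsiM n A N := Finset.subset_union_left

include hA1 hA2 hN in
lemma Psi_sdiff : PsiM n A N \ A = N.image (liftArc n A) := by
  rw [PsiM, Finset.union_sdiff_cancel_left (Psi_img_disjoint hA1 hA2 hN)]

include hA1 hA2 hN in
lemma Psi_matching : IsPartialMatching n (PsiM n A N) := by
  constructor
  · intro p hp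
    rcases Finset.mem_union.1 hp with hpA | hpI
    · exact arc_bounds hA1 hpA
    · obtain ⟨q, hq, rfl⟩ := Finset.mem_image.1 hpI
      obtain ⟨hS1, _, hS2, _⟩ := lift_endpoints hA1 hA2 hN hq
      rw [mem_Sfree] at hS1 hS2
      have hlt : liftm n A q.1 < liftm n A q.2 := by
        obtain ⟨hq1, hq2⟩ := N_mem_Icc hN hq
        exact liftm_lt hA1 hA2 hq1 hq2 (hN.1 q hq).2.1
      exact ⟨hS1.1.1, hlt, hS2.1.2⟩
  · intro p hp q hq hne
    rcases Finset.mem_union.1 hp with hpA | hpI <;> rcases Finset.mem_union.1 hq with hqA | hqI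
    · exact hA2 p hpA q hqA hne
    · obtain ⟨q', hq', rfl⟩ := Finset.mem_image.1 hqI
      obtain ⟨hS1, _, hS2, _⟩ := lift_endpoints hA1 hA2 hN hq'
      have hS1' : (liftArc n A q').1 ∈ Sfree n A := hS1
      have hS2' : (liftArc n A q').2 ∈ Sfree n A := hS2
      have h1 := mem_Epts_fst hpA
      have h2 := mem_Epts_snd hpA
      refine ⟨?_, ?_, ?_, ?_⟩ <;> intro h
      · exact Sfree_not_Epts hS1' (h ▸ h1)
      · exact Sfree_not_Epts hS2' (h ▸ h1)
      · exact Sfree_not_Epts hS1' (h ▸ h2)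
      · exact Sfree_not_Epts hS2' (h ▸ h2)
    · obtain ⟨p', hp', rfl⟩ := Finset.mem_image.1 hpI
      obtain ⟨hS1, _, hS2, _⟩ := lift_endpoints hA1 hA2 hN hp'
      have hS1' : (liftArc n A p').1 ∈ Sfree n A := hS1
      have hS2' : (liftArc n A p').2 ∈ Sfree n A := hS2
      have h1 := mem_Epts_fst hqA
      have h2 := mem_Epts_snd hqA
      refine ⟨?_, ?_, ?_, ?_⟩ <;> intro h
      · exact Sfree_not_Epts hS1' (h.symm ▸ h1)
      · exact Sfree_not_Epts hS1' (h.symm ▸ h2)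
      · exact Sfree_not_Epts hS2' (h.symm ▸ h1)
      · exact Sfree_not_Epts hS2' (h.symm ▸ h2)
    · obtain ⟨p', hp', rfl⟩ := Finset.mem_image.1 hpI
      obtain ⟨q', hq', rfl⟩ := Finset.mem_image.1 hqI
      obtain ⟨hp1, hp2⟩ := N_mem_Icc hN hp'
      obtain ⟨hq1, hq2⟩ := N_mem_Icc hN hq'
      have hne' : p' ≠ q' := by rintro rfl; exact hne rfl
      obtain ⟨a, b, c, d⟩ := hN.2 p' hp' q' hq' hne'
      refine ⟨?_, ?_, ?_, ?_⟩ <;> intro h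
      · exact a (liftm_injOn hA1 hA2 hp1 hq1 h)
      · exact b (liftm_injOn hA1 hA2 hp1 hq2 h)
      · exact c (liftm_injOn hA1 hA2 hp2 hq1 h)
      · exact d (liftm_injOn hA1 hA2 hp2 hq2 h)

include hA1 hA2 hN in
lemma Psi_noncrossing (hk : 2 < k) (hNK : KNoncrossing k N) :
    KNoncrossing k (PsiM n A N) := by
  intro ⟨f, hf, hmono1, hmono2, hcross⟩
  have hMdisj := (Psi_matching hA1 hA2 hN).2
  have m1 : ∀ {r s : Fin k}, r < s → (f r).1 < (f s).1 := fun h => hmono1 h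
  have m2 : ∀ {r s : Fin k}, r < s → (f r).2 < (f s).2 := fun h => hmono2 h
  -- no arc of the crossing lies in A
  have hfA : ∀ r : Fin k, f r ∉ A := by
    intro r hrA
    have hd : (f r).2 = (f r).1 + 1 ∨ (f r).2 = (f r).1 + 2 := by
      rcases hA1 _ hrA with ⟨_, _, h⟩ | ⟨_, _, h⟩
      · exact Or.inl h
      · exact Or.inr h
    obtain ⟨s, t, hst, hsr, htr⟩ : ∃ s t : Fin k, s < t ∧ s ≠ r ∧ t ≠ r := by
      have h0 : (0 : ℕ) < k := by omega
      have h1 : (1 : ℕ) < k := by omega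
      have h2 : (2 : ℕ) < k := by omega
      by_cases hr0 : r.val = 0
      · exact ⟨⟨1, h1⟩, ⟨2, h2⟩, by simp [Fin.lt_def], by simp [Fin.ext_iff]; omega,
          by simp [Fin.ext_iff]; omega⟩
      · by_cases hr1 : r.val = 1
        · exact ⟨⟨0, h0⟩, ⟨2, h2⟩, by simp [Fin.lt_def], by simp [Fin.ext_iff]; omega,
            by simp [Fin.ext_iff]; omega⟩
        · exact ⟨⟨0, h0⟩, ⟨1, h1⟩, by simp [Fin.lt_def], by simp [Fin.ext_iff]; omega,
            by simp [Fin.ext_iff]; omega⟩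
    rcases lt_trichotomy r s with hrs | hrs | hrs
    · -- r < s < t : both (f s).1 and (f t).1 lie strictly between (f r).1 and (f r).2
      have h1 : (f r).1 < (f s).1 := m1 hrs
      have h2 : (f s).1 < (f r).2 := hcross s r
      have h3 : (f s).1 < (f t).1 := m1 hst
      have h4 : (f t).1 < (f r).2 := hcross t r
      omega
    · exact absurd hrs.symm hsr
    · -- s < r
      rcases lt_trichotomy r t with hrt | hrt | hrt
      · -- s < r < t
        have h1 : (f r).1 < (f s).2 := hcross r s
        have h2 : (f s).2 < (f r).2 := m2 hrs
        have h3 : (f r).1 < (f t).1 := m1 hrt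
        have h4 : (f t).1 < (f r).2 := hcross t r
        -- both are the middle vertex (f r).1 + 1
        have he : (f s).2 = (f t).1 := by omega
        have hne : f s ≠ f t := by
          intro h
          have := m1 hst
          rw [h] at this
          omega
        exact (hMdisj (f s) (hf s) (f t) (hf t) hne).2.2.1 he
      · -- r = t
        exact absurd hrt.symm htr
      · -- s < t < r
        have h1 : (f r).1 < (f s).2 := hcross r s
        have h2 : (f s).2 < (f t).2 := m2 hst
        have h3 : (f t).2 < (f r).2 := m2 hrt
        omega
  -- hence each arc comes from N; push the crossing down to N
  have hch : ∀ r : Fin k, ∃ q ∈ N, liftArc n A q = f r := by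
    intro r
    rcases Finset.mem_union.1 (hf r) with h | h
    · exact absurd h (hfA r)
    · obtain ⟨q, hq, hqe⟩ := Finset.mem_image.1 h
      exact ⟨q, hq, hqe⟩
  choose g hg hge using hch
  have hgE : ∀ r : Fin k, (f r).1 = liftm n A (g r).1 ∧ (f r).2 = liftm n A (g r).2 := by
    intro r
    constructor <;> rw [← hge r] <;> rfl
  have hgI : ∀ r : Fin k, idxm n A (f r).1 = (g r).1 ∧ idxm n A (f r).2 = (g r).2 := by
    intro r
    obtain ⟨hS1, he1, hS2, he2⟩ := lift_endpoints hA1 hA2 hN (hg r)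
    exact ⟨by rw [(hgE r).1]; exact he1, by rw [(hgE r).2]; exact he2⟩
  have hgS : ∀ r : Fin k, (f r).1 ∈ Sfree n A ∧ (f r).2 ∈ Sfree n A := by
    intro r
    obtain ⟨hS1, _, hS2, _⟩ := lift_endpoints hA1 hA2 hN (hg r)
    exact ⟨(hgE r).1 ▸ hS1, (hgE r).2 ▸ hS2⟩
  apply hNK
  refine ⟨g, hg, ?_, ?_, ?_⟩
  · intro r s hrs
    show (g r).1 < (g s).1
    rw [← (hgI r).1, ← (hgI s).1]
    exact idxm_lt (hgS r).1 (hgS s).1 (m1 hrs)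
  · intro r s hrs
    show (g r).2 < (g s).2
    rw [← (hgI r).2, ← (hgI s).2]
    exact idxm_lt (hgS r).2 (hgS s).2 (m2 hrs)
  · intro r s
    show (g r).1 < (g s).2
    rw [← (hgI r).1, ← (hgI s).2]
    exact idxm_lt (hgS r).1 (hgS s).2 (hcross r s)

include hA1 hA2 hN in
lemma Psi_isolated : isolatedCount n (PsiM n A N) = isolatedCount (n - 2 * A.card) N := by
  classical
  set m := n - 2 * A.card with hm
  have hiso : ((Finset.Icc 1 n).filter fun v => ∀ p ∈ PsiM n A N, p.1 ≠ v ∧ p.2 ≠ v)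
      = ((Finset.Icc 1 m).filter fun j => ∀ q ∈ N, q.1 ≠ j ∧ q.2 ≠ j).image (liftm n A) := by
    ext v
    simp only [Finset.mem_filter, Finset.mem_image]
    constructor
    · rintro ⟨hv, hisol⟩
      have hvS : v ∈ Sfree n A := by
        rw [mem_Sfree]
        rw [Finset.mem_Icc] at hv
        exact ⟨hv, fun p hp => hisol p (Psi_subset hA1 hA2 hN hp)⟩
      refine ⟨idxm n A v, ⟨idxm_mem hA1 hA2 hvS, ?_⟩, liftm_idxm hvS⟩
      intro q hq
      obtain ⟨hS1, he1, hS2, he2⟩ := lift_endpoints hA1 hA2 hN hq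
      have hql : liftArc n A q ∈ PsiM n A N :=
        Finset.mem_union.2 (Or.inr (Finset.mem_image_of_mem _ hq))
      have hqi := hisol _ hql
      constructor
      · intro h
        apply hqi.1
        show liftm n A q.1 = v
        rw [h, liftm_idxm hvS]
      · intro h
        apply hqi.2
        show liftm n A q.2 = v
        rw [h, liftm_idxm hvS]
    · rintro ⟨j, ⟨hj, hisol⟩, rfl⟩
      obtain ⟨hjS, hje⟩ := liftm_spec hA1 hA2 hj
      have hjI : liftm n A j ∈ Finset.Icc 1 n := by
        rw [mem_Sfree] at hjS
        rw [Finset.mem_Icc]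
        exact hjS.1
      refine ⟨hjI, ?_⟩
      intro p hp
      rcases Finset.mem_union.1 hp with hpA | hpI
      · rw [mem_Sfree] at hjS
        exact hjS.2 p hpA
      · obtain ⟨q, hq, rfl⟩ := Finset.mem_image.1 hpI
        obtain ⟨hq1, hq2⟩ := N_mem_Icc hN hq
        have hqi := hisol q hq
        constructor
        · show liftm n A q.1 ≠ liftm n A j
          intro h
          exact hqi.1 (liftm_injOn hA1 hA2 hq1 hj h)
        · show liftm n A q.2 ≠ liftm n A j
          intro h
          exact hqi.2 (liftm_injOn hA1 hA2 hq2 hj h)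
  rw [isolatedCount, isolatedCount, hiso]
  apply Finset.card_image_of_injOn
  intro u hu v hv huv
  simp only [Finset.mem_coe, Finset.mem_filter] at hu hv
  exact liftm_injOn hA1 hA2 hu.1 hv.1 huv

include hA1 hA2 hN in
lemma Phi_Psi : PhiM n A (PsiM n A N) = N := by
  rw [PhiM, Psi_sdiff hA1 hA2 hN, Finset.image_image]
  have : ∀ q ∈ N, (idxArc n A ∘ liftArc n A) q = q := by
    intro q hq
    obtain ⟨_, he1, _, he2⟩ := lift_endpoints hA1 hA2 hN hq
    show (idxm n A (liftm n A q.1), idxm n A (liftm n A q.2)) = q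
    rw [he1, he2]
  rw [Finset.image_congr (fun q hq => this q hq), Finset.image_id']

end Backward

section Inverse

variable {n k ℓ : ℕ} {A M : Finset (ℕ × ℕ)}
variable (hA1 : ∀ p ∈ A, IsOneArc n p ∨ IsTwoArc n p) (hA2 : ArcsDisjoint A)
variable (hM : IsPartialMatching n M) (hAM : A ⊆ M)

include hM hAM in
lemma Psi_Phi : PsiM n A (PhiM n A M) = M := by
  rw [PsiM, PhiM, Finset.image_image]
  have : ∀ p ∈ M \ A, (liftArc n A ∘ idxArc n A) p = p := by
    intro p hp
    obtain ⟨hS1, hS2⟩ := sdiff_mem_Sfree hM hAM hp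
    show (liftm n A (idxm n A p.1), liftm n A (idxm n A p.2)) = p
    rw [liftm_idxm hS1, liftm_idxm hS2]
  rw [Finset.image_congr (fun p hp => this p hp), Finset.image_id',
    Finset.union_sdiff_of_subset hAM]

end Inverse

section Count

noncomputable def baseSet (k n ℓ : ℕ) : Finset (Finset (ℕ × ℕ)) :=
  (Omega n).filter
    (fun M => IsPartialMatching n M ∧ KNoncrossing k M ∧ isolatedCount n M = ℓ)

lemma matching_mem_Omega {n : ℕ} {M : Finset (ℕ × ℕ)} (hM : IsPartialMatching n M) :
    M ∈ Omega n := by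
  rw [Omega, Finset.mem_powerset]
  intro p hp
  obtain ⟨h1, h2, h3⟩ := hM.1 p hp
  rw [Finset.mem_product, Finset.mem_Icc, Finset.mem_Icc]
  omega

lemma fMatch_eq_card (k n ℓ : ℕ) : fMatch k n ℓ = (baseSet k n ℓ).card := by
  rw [fMatch, baseSet]
  exact natCard_eq_filter_card _ _ (fun M hM => matching_mem_Omega hM.1)

lemma card_superset (k n ℓ : ℕ) (hk : 2 < k) {A : Finset (ℕ × ℕ)}
    (hA1 : ∀ p ∈ A, IsOneArc n p ∨ IsTwoArc n p) (hA2 : ArcsDisjoint A) :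
    ((baseSet k n ℓ).filter (fun M => A ⊆ M)).card = fMatch k (n - 2 * A.card) ℓ := by
  classical
  rw [fMatch_eq_card]
  apply Finset.card_bij' (fun M _ => PhiM n A M) (fun N _ => PsiM n A N)
  · -- forward maps to target
    intro M hMm
    rw [Finset.mem_filter, baseSet, Finset.mem_filter] at hMm
    obtain ⟨⟨hMO, hM, hK, hiso⟩, hAM⟩ := hMm
    rw [baseSet, Finset.mem_filter]
    refine ⟨matching_mem_Omega (Phi_matching hA1 hA2 hM hAM), Phi_matching hA1 hA2 hM hAM,
      Phi_noncrossing hM hAM hK, ?_⟩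
    rw [Phi_isolated hA1 hA2 hM hAM, hiso]
  · -- backward maps to source
    intro N hNm
    rw [baseSet, Finset.mem_filter] at hNm
    obtain ⟨hNO, hN, hNK, hNiso⟩ := hNm
    rw [Finset.mem_filter, baseSet, Finset.mem_filter]
    exact ⟨⟨matching_mem_Omega (Psi_matching hA1 hA2 hN), Psi_matching hA1 hA2 hN,
      Psi_noncrossing hA1 hA2 hN hk hNK, by
        rw [Psi_isolated hA1 hA2 hN, hNiso]⟩, Psi_subset hA1 hA2 hN⟩
  · intro M hMm
    rw [Finset.mem_filter, baseSet, Finset.mem_filter] at hMm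
    exact Psi_Phi hMm.1.2.1 hMm.2
  · intro N hNm
    rw [baseSet, Finset.mem_filter] at hNm
    exact Phi_Psi hA1 hA2 hNm.2.1

end Count

section Main

def shortArc (p : ℕ × ℕ) : Prop := p.2 = p.1 + 1 ∨ p.2 = p.1 + 2

instance : DecidablePred shortArc := fun p => by unfold shortArc; infer_instance

noncomputable def validSet (n : ℕ) : Finset (Finset (ℕ × ℕ)) :=
  (Omega n).filter (fun A => (∀ p ∈ A, IsOneArc n p ∨ IsTwoArc n p) ∧ ArcsDisjoint A)

noncomputable def c1 (A : Finset (ℕ × ℕ)) : ℕ := (A.filter (fun p => p.2 = p.1 + 1)).card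
noncomputable def c2 (A : Finset (ℕ × ℕ)) : ℕ := (A.filter (fun p => p.2 = p.1 + 2)).card

lemma valid_mem_Omega {n : ℕ} {A : Finset (ℕ × ℕ)}
    (hA1 : ∀ p ∈ A, IsOneArc n p ∨ IsTwoArc n p) : A ∈ Omega n := by
  rw [Omega, Finset.mem_powerset]
  intro p hp
  obtain ⟨h1, h2, h3⟩ := arc_bounds hA1 hp
  rw [Finset.mem_product, Finset.mem_Icc, Finset.mem_Icc]
  omega

lemma lamSel_eq_card (n b₁ b₂ : ℕ) :
    lamSel n b₁ b₂ = ((validSet n).filter (fun A => c1 A = b₁ ∧ c2 A = b₂)).card := by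
  classical
  rw [lamSel]
  rw [natCard_eq_filter_card (Omega n)
    (fun A => (∀ p ∈ A, IsOneArc n p ∨ IsTwoArc n p) ∧ ArcsDisjoint A ∧
      (A.filter fun p => p.2 = p.1 + 1).card = b₁ ∧
      (A.filter fun p => p.2 = p.1 + 2).card = b₂)
    (fun A hA => valid_mem_Omega hA.1)]
  congr 1
  rw [validSet, Finset.filter_filter]
  apply Finset.filter_congr
  intro A _
  simp only [c1, c2]
  tauto

lemma card_eq_c1_add_c2 {n : ℕ} {A : Finset (ℕ × ℕ)}
    (hA1 : ∀ p ∈ A, IsOneArc n p ∨ IsTwoArc n p) : A.card = c1 A + c2 A := by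
  classical
  have h := Finset.card_filter_add_card_filter_not
    (s := A) (p := fun p => p.2 = p.1 + 1)
  have he : A.filter (fun p => ¬ p.2 = p.1 + 1) = A.filter (fun p => p.2 = p.1 + 2) := by
    apply Finset.filter_congr
    intro p hp
    rcases hA1 p hp with ⟨_, _, h'⟩ | ⟨_, _, h'⟩ <;> simp [h'] <;> omega
  rw [he] at h
  rw [c1, c2]
  omega

lemma c_le {n : ℕ} {A : Finset (ℕ × ℕ)}
    (hA1 : ∀ p ∈ A, IsOneArc n p ∨ IsTwoArc n p) (hA2 : ArcsDisjoint A) :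
    c1 A ≤ n ∧ c2 A ≤ n := by
  have hcard : A.card ≤ n := by
    have hinj : (A.image Prod.fst).card = A.card := by
      apply Finset.card_image_of_injOn
      intro p hp q hq hpq
      by_contra hne
      exact (hA2 p hp q hq hne).1 hpq
    have hsub : A.image Prod.fst ⊆ Finset.Icc 1 n := by
      intro x hx
      obtain ⟨p, hp, rfl⟩ := Finset.mem_image.1 hx
      obtain ⟨a, b, c⟩ := arc_bounds hA1 hp
      rw [Finset.mem_Icc]; omega
    have := Finset.card_le_card hsub
    rw [hinj, Nat.card_Icc] at this
    omega
  constructor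
  · exact le_trans (Finset.card_filter_le _ _) hcard
  · exact le_trans (Finset.card_filter_le _ _) hcard

theorem SRes_eq_alternating_sum' (k n ℓ : ℕ) (hk : 2 < k) :
    (SRes k n ℓ : ℤ) =
      ∑ b₁ ∈ Finset.range (n + 1), ∑ b₂ ∈ Finset.range (n + 1),
        (-1) ^ (b₁ + b₂) * (lamSel n b₁ b₂ : ℤ) *
          (fMatch k (n - 2 * (b₁ + b₂)) ℓ : ℤ) := by
  classical
  -- Step A : SRes as a card over baseSet
  have hA : SRes k n ℓ = ((baseSet k n ℓ).filter
      (fun M => M.filter shortArc = ∅)).card := by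
    rw [SRes]
    rw [natCard_eq_filter_card (Omega n)
      (fun M => IsPartialMatching n M ∧ KNoncrossing k M ∧
        (∀ p ∈ M, p.2 ≠ p.1 + 1 ∧ p.2 ≠ p.1 + 2) ∧ isolatedCount n M = ℓ)
      (fun M hM => matching_mem_Omega hM.1)]
    congr 1
    rw [baseSet, Finset.filter_filter]
    apply Finset.filter_congr
    intro M _
    simp only [Finset.filter_eq_empty_iff, shortArc]
    constructor
    · rintro ⟨h1, h2, h3, h4⟩
      exact ⟨⟨h1, h2, h4⟩, fun p hp => by have := h3 p hp; tauto⟩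
    · rintro ⟨⟨h1, h2, h4⟩, h3⟩
      exact ⟨h1, h2, fun p hp => by have := h3 (hp); tauto, h4⟩
  -- Step B : card as alternating sum over subsets of short arcs
  have hB : (SRes k n ℓ : ℤ) =
      ∑ M ∈ baseSet k n ℓ, ∑ A ∈ (M.filter shortArc).powerset, (-1 : ℤ) ^ A.card := by
    rw [hA]
    rw [Finset.card_filter]
    push_cast
    apply Finset.sum_congr rfl
    intro M _
    rw [Finset.sum_powerset_neg_one_pow_card]
  -- Step C : extend inner sum over Omega n
  have hC : (SRes k n ℓ : ℤ) =
      ∑ A ∈ Omega n, (-1 : ℤ) ^ A.card *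
        (((baseSet k n ℓ).filter (fun M => A ⊆ M.filter shortArc)).card : ℤ) := by
    rw [hB]
    have hpow : ∀ M ∈ baseSet k n ℓ,
        ∑ A ∈ (M.filter shortArc).powerset, (-1 : ℤ) ^ A.card =
        ∑ A ∈ Omega n, if A ⊆ M.filter shortArc then (-1 : ℤ) ^ A.card else 0 := by
      intro M hM
      rw [← Finset.sum_filter]
      congr 1
      ext A
      rw [Finset.mem_powerset, Finset.mem_filter]
      constructor
      · intro h
        refine ⟨?_, h⟩
        rw [Omega, Finset.mem_powerset] at *
        have hMO : M ∈ Omega n := Finset.mem_of_mem_filter M hM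
        rw [Omega, Finset.mem_powerset] at hMO
        exact fun p hp => hMO (Finset.mem_of_mem_filter p (h hp))
      · exact fun h => h.2
    rw [Finset.sum_congr rfl hpow, Finset.sum_comm]
    apply Finset.sum_congr rfl
    intro A _
    rw [← Finset.sum_filter, Finset.sum_const, nsmul_eq_mul, mul_comm]
  -- Step D : restrict to valid A
  have hD : (SRes k n ℓ : ℤ) =
      ∑ A ∈ validSet n, (-1 : ℤ) ^ A.card *
        (((baseSet k n ℓ).filter (fun M => A ⊆ M)).card : ℤ) := by
    rw [hC]
    rw [← Finset.sum_subset (Finset.filter_subset _ (Omega n) : validSet n ⊆ Omega n)]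
    · apply Finset.sum_congr rfl
      intro A hAv
      simp only [validSet, Finset.mem_filter] at hAv
      obtain ⟨hAO, hA1, hA2⟩ := hAv
      congr 2
      congr 1
      apply Finset.filter_congr
      intro M hM
      rw [baseSet, Finset.mem_filter] at hM
      constructor
      · intro h p hp
        exact Finset.mem_of_mem_filter p (h hp)
      · intro h p hp
        rw [Finset.mem_filter]
        refine ⟨h hp, ?_⟩
        rcases hA1 p hp with ⟨_, _, h'⟩ | ⟨_, _, h'⟩
        · exact Or.inl h'
        · exact Or.inr h'
    · intro A hAO hAnv
      have hempty : (baseSet k n ℓ).filter (fun M => A ⊆ M.filter shortArc) = ∅ := by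
        rw [Finset.filter_eq_empty_iff]
        intro M hM hsub
        apply hAnv
        simp only [validSet, Finset.mem_filter]
        rw [baseSet, Finset.mem_filter] at hM
        refine ⟨hAO, ?_, ?_⟩
        · intro p hp
          have hpm := hsub hp
          rw [Finset.mem_filter] at hpm
          obtain ⟨hpM, hps⟩ := hpm
          obtain ⟨u1, u2, u3⟩ := hM.2.1.1 p hpM
          rcases hps with h' | h'
          · exact Or.inl ⟨u1, by omega, h'⟩
          · exact Or.inr ⟨u1, by omega, h'⟩
        · intro p hp q hq hne
          exact hM.2.1.2 p (Finset.mem_of_mem_filter p (hsub hp))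
            q (Finset.mem_of_mem_filter q (hsub hq)) hne
      rw [hempty]
      simp
  -- Step E : evaluate the inner card via the bijection
  have hE : (SRes k n ℓ : ℤ) =
      ∑ A ∈ validSet n, (-1 : ℤ) ^ (c1 A + c2 A) *
        (fMatch k (n - 2 * (c1 A + c2 A)) ℓ : ℤ) := by
    rw [hD]
    apply Finset.sum_congr rfl
    intro A hAv
    simp only [validSet, Finset.mem_filter] at hAv
    obtain ⟨hAO, hA1, hA2⟩ := hAv
    rw [card_superset k n ℓ hk hA1 hA2, ← card_eq_c1_add_c2 hA1]
  -- Step F : fiberwise grouping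
  rw [hE]
  have hmaps : ∀ A ∈ validSet n, (c1 A, c2 A) ∈
      Finset.range (n + 1) ×ˢ Finset.range (n + 1) := by
    intro A hAv
    simp only [validSet, Finset.mem_filter] at hAv
    obtain ⟨hle1, hle2⟩ := c_le hAv.2.1 hAv.2.2
    rw [Finset.mem_product, Finset.mem_range, Finset.mem_range]
    omega
  rw [← Finset.sum_fiberwise_of_maps_to' hmaps
    (fun b : ℕ × ℕ => (-1 : ℤ) ^ (b.1 + b.2) * (fMatch k (n - 2 * (b.1 + b.2)) ℓ : ℤ))]
  rw [Finset.sum_product]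
  apply Finset.sum_congr rfl
  intro b₁ _
  apply Finset.sum_congr rfl
  intro b₂ _
  rw [Finset.sum_const, nsmul_eq_mul]
  have hfib : (validSet n).filter (fun A => (c1 A, c2 A) = (b₁, b₂)) =
      (validSet n).filter (fun A => c1 A = b₁ ∧ c2 A = b₂) := by
    apply Finset.filter_congr
    intro A _
    rw [Prod.mk.injEq]
  rw [hfib, ← lamSel_eq_card]
  ring

end Main


/-- For `k > 2`:
`S_k^{(r)}(n,ℓ) = Σ_{b₁,b₂ ≥ 0} (-1)^{b₁+b₂} λ(n,b₁,b₂) f_k(n-2(b₁+b₂), ℓ)`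
(the sum is finite since `λ(n,b₁,b₂) = 0` once `2(b₁+b₂) > n`). -/
theorem SRes_eq_alternating_sum (k n ℓ : ℕ) (hk : 2 < k) :
    (SRes k n ℓ : ℤ) =
      ∑ b₁ ∈ Finset.range (n + 1), ∑ b₂ ∈ Finset.range (n + 1),
        (-1) ^ (b₁ + b₂) * (lamSel n b₁ b₂ : ℤ) *
          (fMatch k (n - 2 * (b₁ + b₂)) ℓ : ℤ) := by
  exact SRes_eq_alternating_sum' k n ℓ hk
end
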